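/- Let R be a ring, R' an R-algebra, and M a finitely presented right R-module with Ext^1_R(M, X) = 0 for every R'-module X (viewed as an R-module via R → R'). Then M ⊗_R R' is a finitely generated projective R'-module. -/

import Mathlib

/-!
Choose a surjection `f : R'ⁿ → R' ⊗ M`; its kernel `K` is an `R'`-module. Pulling the sequence
`0 → K → R'ⁿ → R' ⊗ M → 0` back along `m ↦ 1 ⊗ m` gives an extension of `M` by `K`, which splits
by hypothesis. The splitting is an `R`-linear lift `M → R'ⁿ` of `m ↦ 1 ⊗ m`, and its `R'`-linear
extension is a section of `f`.
-/


open CategoryTheory TensorProduct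

/-- `Tor₁^R(M, N)`, as an object of `ModuleCat R`. -/
noncomputable def tor1 (R : Type) [CommRing R] (M N : Type) [AddCommGroup M] [Module R M]
    [AddCommGroup N] [Module R N] : ModuleCat R :=
  ((Tor (ModuleCat R) 1).obj (ModuleCat.of R M)).obj (ModuleCat.of R N)

/-- `Ext¹_R(M, N) = 0`, expressed concretely: every short exact sequence
`0 → N → X → M → 0` splits. -/
def Ext1Vanishes (R : Type) [CommRing R] (M N : Type) [AddCommGroup M] [Module R M]
    [AddCommGroup N] [Module R N] : Prop :=
  ∀ (X : Type) [AddCommGroup X] [Module R X] (i : N →ₗ[R] X) (p : X →ₗ[R] M),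
    Function.Injective i → Function.Surjective p →
    LinearMap.range i = LinearMap.ker p →
    ∃ s : M →ₗ[R] X, p ∘ₗ s = LinearMap.id

section

variable {R : Type} [CommRing R] {M K F N : Type} [AddCommGroup M] [Module R M]
  [AddCommGroup K] [Module R K] [AddCommGroup F] [Module R F] [AddCommGroup N] [Module R N]

def pullbackSubmodule (f : F →ₗ[R] N) (φ : M →ₗ[R] N) : Submodule R (F × M) :=
  LinearMap.ker (f ∘ₗ LinearMap.fst R F M - φ ∘ₗ LinearMap.snd R F M)

lemma mem_pullbackSubmodule {f : F →ₗ[R] N} {φ : M →ₗ[R] N} {x : F × M} :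
    x ∈ pullbackSubmodule f φ ↔ f x.1 = φ x.2 := by
  simp [pullbackSubmodule, sub_eq_zero]

theorem Ext1Vanishes.exists_lift {i : K →ₗ[R] F} {f : F →ₗ[R] N} (hi : Function.Injective i)
    (hexact : Function.Exact i f) (hf : Function.Surjective f) (hM : Ext1Vanishes R M K)
    (φ : M →ₗ[R] N) : ∃ σ : M →ₗ[R] F, f ∘ₗ σ = φ := by
  let j : K →ₗ[R] pullbackSubmodule f φ :=
    LinearMap.codRestrict _ (LinearMap.inl R F M ∘ₗ i) fun k => by
      simp [mem_pullbackSubmodule, hexact.apply_apply_eq_zero]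
  let p : pullbackSubmodule f φ →ₗ[R] M := LinearMap.snd R F M ∘ₗ (pullbackSubmodule f φ).subtype
  have hj : Function.Injective j := fun a b hab => hi congr(($hab).1.1)
  have hp : Function.Surjective p := fun m => by
    obtain ⟨v, hv⟩ := hf (φ m)
    exact ⟨⟨(v, m), mem_pullbackSubmodule.2 hv⟩, rfl⟩
  have hjp : LinearMap.range j = LinearMap.ker p := by
    ext ⟨⟨v, m⟩, hvm⟩
    simp only [LinearMap.mem_range, LinearMap.mem_ker]
    constructor
    · rintro ⟨k, hk⟩
      exact congr(($hk).1.2).symm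
    · rintro (rfl : m = 0)
      obtain ⟨k, rfl⟩ := (hexact v).1 (by simpa using mem_pullbackSubmodule.1 hvm)
      exact ⟨k, rfl⟩
  obtain ⟨s, hs⟩ := hM _ j p hj hp hjp
  refine ⟨LinearMap.fst R F M ∘ₗ (pullbackSubmodule f φ).subtype ∘ₗ s, LinearMap.ext fun m => ?_⟩
  have hsm : (s m : F × M).2 = m := congr($hs m)
  simpa [hsm] using mem_pullbackSubmodule.1 (s m).2

end

theorem Module.Projective.baseChange_of_lift {R A M P : Type} [CommRing R] [Ring A]
    [Algebra R A] [AddCommGroup M] [Module R M] [AddCommGroup P] [Module A P] [Module R P]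
    [IsScalarTower R A P] [Module.Projective A P] (f : P →ₗ[A] A ⊗[R] M) (σ : M →ₗ[R] P)
    (hσ : f.restrictScalars R ∘ₗ σ = TensorProduct.mk R A M 1) :
    Module.Projective A (A ⊗[R] M) := by
  let σ' : A ⊗[R] M →ₗ[A] P :=
    TensorProduct.AlgebraTensorModule.lift (LinearMap.toSpanSingleton A _ σ)
  refine .of_split σ' f (TensorProduct.AlgebraTensorModule.ext fun a m => ?_)
  have hσm : f (σ m) = 1 ⊗ₜ m := LinearMap.congr_fun hσ m
  simp [σ', hσm, TensorProduct.smul_tmul']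

theorem stmt7_general {R R' : Type} [CommRing R] [Ring R'] [Algebra R R']
    {M : Type} [AddCommGroup M] [Module R M]
    (hM : Module.FinitePresentation R M)
    (hext : ∀ (X : Type) [AddCommGroup X] [Module R X] [Module R' X] [IsScalarTower R R' X],
      Ext1Vanishes R M X) :
    Module.Finite R' (R' ⊗[R] M) ∧ Module.Projective R' (R' ⊗[R] M) := by
  refine ⟨inferInstance, ?_⟩
  obtain ⟨n, f, hf⟩ := Module.Finite.exists_fin' R' (R' ⊗[R] M)
  obtain ⟨σ, hσ⟩ := (hext (LinearMap.ker f)).exists_lift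
    (i := (LinearMap.ker f).subtype.restrictScalars R) (f := f.restrictScalars R)
    Subtype.val_injective f.exact_subtype_ker_map hf (TensorProduct.mk R R' M 1)
  exact .baseChange_of_lift f σ hσ

/-- Let `R → R'` be a ring epimorphism with `Tor₁^R(R', R') = 0`
(a homological epimorphism in degrees ≤ 1), and let `M` be a finitely presented
`R`-module with `Ext¹_R(M, X) = 0` for every `R'`-module `X` (viewed as an `R`-module
by restriction of scalars).  Then `M ⊗_R R'` is a finitely generated projective
`R'`-module. -/
theorem stmt7 {R R' : Type} [CommRing R] [Ring R'] [Algebra R R']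
    (hepi : ∀ (T : Type) [Ring T] (g h : R' →+* T),
      g.comp (algebraMap R R') = h.comp (algebraMap R R') → g = h)
    (htor : Subsingleton ↥(tor1 R R' R'))
    {M : Type} [AddCommGroup M] [Module R M]
    (hM : Module.FinitePresentation R M)
    (hext : ∀ (X : Type) [AddCommGroup X] [Module R X] [Module R' X] [IsScalarTower R R' X],
      Ext1Vanishes R M X) :
    Module.Finite R' (R' ⊗[R] M) ∧ Module.Projective R' (R' ⊗[R] M) :=
  stmt7_general hM hext
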